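/- Transference, part (b): Let m,n ≥ 1, Y ∈ ℝ^{m×n}, 0 < c < 1, t > 0, and set R_c = (1/(m+n)) log(1/c). Suppose there exists a = (a_1,…,a_{m+n}) with Σ_{i≤m} a_i = t = −Σ_{j>m} a_{m+j}, a_i > 0 for i ≤ m and a_{m+j} < 0 for j ≤ n, such that δ(exp(a)·x_Y) < c^{(m+n−1)/(m(m+n))}. Then there exists a' in the cone C_{R_c}(t − ((n−1)/(m+n)) log c) (i.e., Σ_{i≤m} a'_i = t − ((n−1)/(m+n)) log c = −Σ_j a'_{m+j}, with a'_i > −R_c for i ≤ m and a'_{m+j} < −R_c for j ≤ n) such that δ(exp(a')·x_Y) < c^{1/(m+n)}. -/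

import Mathlib

/-!
Write `ε = c^{(m+n-1)/(m(m+n))} = exp (-R - κ)` with `R = log (1/c) / (m+n)` and
`κ = (n-1) R / m`. A nonzero vector `(p + Y q, q)` of `x_Y` with `‖exp(a) (p + Y q, q)‖ < ε ≤ 1`
must have `q ≠ 0`, because `a ≥ 0` does not contract the first block and integers of absolute
value `< 1` vanish; a coordinate `q_{j₀} ≠ 0` then forces `b_{j₀} < -R - κ`.
Now raise every `a_i` by `κ` and lower the `b_j` by `(n-1) R` in total: clip each `b_j` below `-R`
and let `b_{j₀}` absorb the rest, which it can since it starts below `-R - κ`. No coordinate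
rises by more than `κ`, so the same lattice vector has length `< e^κ ε = c^{1/(m+n)}`.
-/

open scoped BigOperators

/-- The lattice `x_Y = ((I_m, Y),(0,I_n))·ℤ^{m+n}`, viewed inside `ℝ^m × ℝ^n`. -/
def xYset (m n : ℕ) (Y : Fin m → Fin n → ℝ) : Set ((Fin m → ℝ) × (Fin n → ℝ)) :=
  {v | ∃ (p : Fin m → ℤ) (q : Fin n → ℤ),
    v.1 = (fun i => (p i : ℝ) + ∑ j, Y i j * (q j : ℝ)) ∧ v.2 = fun j => (q j : ℝ)}

/-- Action of the diagonal element `exp(a)` on subsets of `ℝ^m × ℝ^n`. -/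
def diagAct {m n : ℕ} (a : Fin m → ℝ) (b : Fin n → ℝ)
    (S : Set ((Fin m → ℝ) × (Fin n → ℝ))) : Set ((Fin m → ℝ) × (Fin n → ℝ)) :=
  (fun v : (Fin m → ℝ) × (Fin n → ℝ) =>
    ((fun i => Real.exp (a i) * v.1 i), fun j => Real.exp (b j) * v.2 j)) '' S

/-- `δ(S)`: shortest sup-norm length of a nonzero vector of `S`. -/
noncomputable def deltaSet {m n : ℕ} (S : Set ((Fin m → ℝ) × (Fin n → ℝ))) : ℝ :=
  sInf {x | ∃ v ∈ S, v ≠ 0 ∧ ‖v‖ = x}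

open Finset

section Redistribution

variable {ι : Type*} [Fintype ι] [DecidableEq ι]

theorem exists_forall_lt_neg_sum_eq_sub {b : ι → ℝ} (hb : ∀ j, b j ≤ 0) {R s : ℝ} (hR : 0 ≤ R)
    (hs : 0 < s) {j₀ : ι} (hj₀ : b j₀ + (Fintype.card ι - 1) * s < -R) :
    ∃ b' : ι → ℝ, ∑ j, b' j = ∑ j, b j - (Fintype.card ι - 1) * R ∧ (∀ j, b' j < -R) ∧
      ∀ j, b' j ≤ b j + (Fintype.card ι - 1) * s := by
  -- Clip every coordinate at `-R - s` and let `j₀` absorb the change of the sum; each clipped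
  -- coordinate drops by at most `R + s`, which is exactly the room `hj₀` leaves at `j₀`.
  set f : ι → ℝ := fun j => min (b j) (-R - s)
  set x := ∑ j, b j - (Fintype.card ι - 1) * R - ∑ j ∈ univ.erase j₀, f j
  have hcard_pos : 0 < Fintype.card ι := Fintype.card_pos_iff.2 ⟨j₀⟩
  have hcard : ((univ.erase j₀).card : ℝ) = Fintype.card ι - 1 := by
    rw [card_erase_of_mem (mem_univ _), card_univ, Nat.cast_sub hcard_pos, Nat.cast_one]
  have hsum : ∑ j ∈ univ.erase j₀, (b j - f j) ≤ (Fintype.card ι - 1) * (R + s) := by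
    rw [← hcard, ← nsmul_eq_mul]
    refine sum_le_card_nsmul _ _ _ fun j _ => ?_
    have := hb j
    simp only [f, min_def]; split_ifs <;> linarith
  have hx : x ≤ b j₀ + (Fintype.card ι - 1) * s := by
    have := add_sum_erase univ b (mem_univ j₀)
    rw [sum_sub_distrib] at hsum
    simp only [x]; linarith
  have hf_le : ∀ j, f j ≤ b j + (Fintype.card ι - 1) * s := fun j =>
    (min_le_left _ _).trans (le_add_of_nonneg_right (mul_nonneg (hcard ▸ by positivity) hs.le))
  refine ⟨Function.update f j₀ x, ?_, fun j => ?_, fun j => ?_⟩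
  · rw [sum_update_of_mem (mem_univ j₀), sdiff_singleton_eq_erase]; simp only [x]; ring
  · rcases eq_or_ne j j₀ with rfl | hj
    · simp only [Function.update_self]; linarith
    · simp only [Function.update_of_ne hj, f]; linarith [min_le_right (b j) (-R - s)]
  · rcases eq_or_ne j j₀ with rfl | hj
    · simpa using hx
    · simpa [Function.update_of_ne hj] using hf_le j

end Redistribution

section Lattice

variable {m n : ℕ}

noncomputable def diagScale (a : Fin m → ℝ) (b : Fin n → ℝ) (v : (Fin m → ℝ) × (Fin n → ℝ)) :
    (Fin m → ℝ) × (Fin n → ℝ) :=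
  ((fun i => Real.exp (a i) * v.1 i), fun j => Real.exp (b j) * v.2 j)

theorem diagScale_eq_zero_iff {a : Fin m → ℝ} {b : Fin n → ℝ} {v : (Fin m → ℝ) × (Fin n → ℝ)} :
    diagScale a b v = 0 ↔ v = 0 := by
  simp [diagScale, Prod.ext_iff, funext_iff, Real.exp_ne_zero]

theorem abs_fst_apply_le_norm (v : (Fin m → ℝ) × (Fin n → ℝ)) (i : Fin m) : |v.1 i| ≤ ‖v‖ :=
  (norm_le_pi_norm v.1 i).trans (norm_fst_le v)

theorem abs_snd_apply_le_norm (v : (Fin m → ℝ) × (Fin n → ℝ)) (j : Fin n) : |v.2 j| ≤ ‖v‖ :=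
  (norm_le_pi_norm v.2 j).trans (norm_snd_le v)

theorem abs_exp_mul_le_of_le {x y κ : ℝ} (h : x ≤ y + κ) (z : ℝ) :
    |Real.exp x * z| ≤ Real.exp κ * |Real.exp y * z| := by
  rw [abs_mul, abs_mul, abs_of_pos (Real.exp_pos _), abs_of_pos (Real.exp_pos _), ← mul_assoc,
    ← Real.exp_add, add_comm κ]
  gcongr

theorem norm_diagScale_le_of_le {a a' : Fin m → ℝ} {b b' : Fin n → ℝ} {κ : ℝ}
    (ha : ∀ i, a' i ≤ a i + κ) (hb : ∀ j, b' j ≤ b j + κ) (v : (Fin m → ℝ) × (Fin n → ℝ)) :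
    ‖diagScale a' b' v‖ ≤ Real.exp κ * ‖diagScale a b v‖ := by
  have hr : 0 ≤ Real.exp κ * ‖diagScale a b v‖ := by positivity
  refine norm_prod_le_iff.2 ⟨(pi_norm_le_iff_of_nonneg hr).2 fun i => ?_,
    (pi_norm_le_iff_of_nonneg hr).2 fun j => ?_⟩
  · exact (abs_exp_mul_le_of_le (ha i) _).trans
      (mul_le_mul_of_nonneg_left (abs_fst_apply_le_norm (diagScale a b v) i) (Real.exp_pos κ).le)
  · exact (abs_exp_mul_le_of_le (hb j) _).trans
      (mul_le_mul_of_nonneg_left (abs_snd_apply_le_norm (diagScale a b v) j) (Real.exp_pos κ).le)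

theorem bddBelow_norms_ne_zero (S : Set ((Fin m → ℝ) × (Fin n → ℝ))) :
    BddBelow {x | ∃ v ∈ S, v ≠ 0 ∧ ‖v‖ = x} :=
  ⟨0, by rintro _ ⟨v, -, -, rfl⟩; exact norm_nonneg v⟩

theorem deltaSet_le_norm {S : Set ((Fin m → ℝ) × (Fin n → ℝ))} {v : (Fin m → ℝ) × (Fin n → ℝ)}
    (hv : v ∈ S) (hv0 : v ≠ 0) : deltaSet S ≤ ‖v‖ :=
  csInf_le (bddBelow_norms_ne_zero S) ⟨v, hv, hv0, rfl⟩

theorem exists_norm_lt_of_deltaSet_lt {S : Set ((Fin m → ℝ) × (Fin n → ℝ))} {ε : ℝ}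
    (hS : ∃ v ∈ S, v ≠ 0) (h : deltaSet S < ε) : ∃ v ∈ S, v ≠ 0 ∧ ‖v‖ < ε := by
  obtain ⟨v, hv, hv0⟩ := hS
  obtain ⟨_, ⟨w, hw, hw0, rfl⟩, hlt⟩ :=
    (csInf_lt_iff (bddBelow_norms_ne_zero S) ⟨‖v‖, v, hv, hv0, rfl⟩).1 h
  exact ⟨w, hw, hw0, hlt⟩

theorem deltaSet_diagAct_lt {S : Set ((Fin m → ℝ) × (Fin n → ℝ))} {a a' : Fin m → ℝ}
    {b b' : Fin n → ℝ} {κ ε : ℝ} {w : (Fin m → ℝ) × (Fin n → ℝ)} (hw : w ∈ S) (hw0 : w ≠ 0)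
    (hwε : ‖diagScale a b w‖ < ε) (ha : ∀ i, a' i ≤ a i + κ) (hb : ∀ j, b' j ≤ b j + κ) :
    deltaSet (diagAct a' b' S) < Real.exp κ * ε :=
  calc deltaSet (diagAct a' b' S) ≤ ‖diagScale a' b' w‖ :=
        deltaSet_le_norm ⟨w, hw, rfl⟩ (diagScale_eq_zero_iff.not.2 hw0)
    _ ≤ Real.exp κ * ‖diagScale a b w‖ := norm_diagScale_le_of_le ha hb w
    _ < Real.exp κ * ε := by gcongr

theorem exists_mem_xYset_ne_zero (hm : 0 < m) (Y : Fin m → Fin n → ℝ) :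
    ∃ v ∈ xYset m n Y, v ≠ 0 := by
  refine ⟨(1, 0), ⟨1, 0, by ext; simp, by ext; simp⟩, fun h => ?_⟩
  simpa using congrFun (congrArg Prod.fst h) ⟨0, hm⟩

theorem exists_one_le_abs_snd_of_mem_xYset {Y : Fin m → Fin n → ℝ} {a : Fin m → ℝ}
    {b : Fin n → ℝ} {w : (Fin m → ℝ) × (Fin n → ℝ)} (hw : w ∈ xYset m n Y) (hw0 : w ≠ 0)
    (ha : ∀ i, 0 ≤ a i) (hlt : ‖diagScale a b w‖ < 1) : ∃ j, 1 ≤ |w.2 j| := by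
  obtain ⟨p, q, hw1, hw2⟩ := hw
  by_contra! hsmall
  have hq : q = 0 := funext fun j => Int.abs_lt_one_iff.1 <| by
    exact_mod_cast (show |(q j : ℝ)| < 1 by simpa [hw2] using hsmall j)
  have hp : p = 0 := funext fun i => Int.abs_lt_one_iff.1 <| by
    have hexp : |w.1 i| ≤ |Real.exp (a i) * w.1 i| := by
      rw [abs_mul, abs_of_pos (Real.exp_pos _)]
      exact le_mul_of_one_le_left (abs_nonneg _) (Real.one_le_exp (ha i))
    have := (hexp.trans (abs_fst_apply_le_norm (diagScale a b w) i)).trans_lt hlt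
    exact_mod_cast (show |(p i : ℝ)| < 1 by simpa [hw1, hq] using this)
  exact hw0 (Prod.ext (by ext; simp [hw1, hp, hq]) (by ext; simp [hw2, hq]))

theorem exists_mem_xYset_norm_diagScale_lt (hm : 0 < m) {Y : Fin m → Fin n → ℝ}
    {a : Fin m → ℝ} {b : Fin n → ℝ} {r : ℝ} (ha : ∀ i, 0 ≤ a i) (hr : r ≤ 0)
    (h : deltaSet (diagAct a b (xYset m n Y)) < Real.exp r) :
    ∃ w ∈ xYset m n Y, w ≠ 0 ∧ ‖diagScale a b w‖ < Real.exp r ∧ ∃ j, b j < r := by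
  obtain ⟨v, hv, hv0⟩ := exists_mem_xYset_ne_zero hm Y
  obtain ⟨_, ⟨w, hw, rfl⟩, hw0, hwr⟩ := exists_norm_lt_of_deltaSet_lt
    ⟨diagScale a b v, Set.mem_image_of_mem _ hv, diagScale_eq_zero_iff.not.2 hv0⟩ h
  have hw0 : w ≠ 0 := diagScale_eq_zero_iff.not.1 hw0
  obtain ⟨j, hj⟩ :=
    exists_one_le_abs_snd_of_mem_xYset hw hw0 ha (hwr.trans_le (Real.exp_le_one_iff.2 hr))
  refine ⟨w, hw, hw0, hwr, j, Real.exp_lt_exp.1 ?_⟩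
  calc Real.exp (b j) ≤ |Real.exp (b j) * w.2 j| := by
        rw [abs_mul, abs_of_pos (Real.exp_pos _)]; exact le_mul_of_one_le_right (by positivity) hj
    _ ≤ ‖diagScale a b w‖ := abs_snd_apply_le_norm (diagScale a b w) j
    _ < Real.exp r := hwr

end Lattice

theorem transference_b_general
    (m n : ℕ) (hm : 1 ≤ m) (hn : 1 ≤ n) (Y : Fin m → Fin n → ℝ)
    (c : ℝ) (hc0 : 0 < c) (hc1 : c < 1) (t : ℝ)
    (a : Fin m → ℝ) (b : Fin n → ℝ)
    (ha : ∑ i, a i = t) (hb : ∑ j, b j = -t)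
    (ha' : ∀ i, 0 < a i) (hb' : ∀ j, b j < 0)
    (hδ : deltaSet (diagAct a b (xYset m n Y)) <
      c ^ (((m : ℝ) + n - 1) / ((m : ℝ) * ((m : ℝ) + n)))) :
    ∃ (a' : Fin m → ℝ) (b' : Fin n → ℝ),
      (∑ i, a' i = t - (((n : ℝ) - 1) / ((m : ℝ) + n)) * Real.log c) ∧
      (∑ j, b' j = -(t - (((n : ℝ) - 1) / ((m : ℝ) + n)) * Real.log c)) ∧
      (∀ i, -((1 / ((m : ℝ) + n)) * Real.log (1 / c)) < a' i) ∧
      (∀ j, b' j < -((1 / ((m : ℝ) + n)) * Real.log (1 / c))) ∧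
      deltaSet (diagAct a' b' (xYset m n Y)) < c ^ ((1 : ℝ) / ((m : ℝ) + n)) := by
  set R := (1 / ((m : ℝ) + n)) * Real.log (1 / c)
  set κ := ((n : ℝ) - 1) * (R / m)
  have hm0 : (0 : ℝ) < m := by exact_mod_cast hm
  have hR : 0 < R := by
    have := Real.log_pos (one_lt_one_div hc0 hc1); positivity
  have hκ : 0 ≤ κ := mul_nonneg (by simp [hn]) (by positivity)
  have hlog : Real.log c = -((m + n) * R) := by
    simp only [R, one_div, Real.log_inv]; field_simp
  have hshift : t - ((n - 1) / (m + n)) * Real.log c = t + (n - 1) * R := by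
    rw [hlog]; field_simp; ring
  rw [Real.rpow_def_of_pos hc0, show Real.log c * ((m + n - 1) / (m * (m + n))) = -R - κ by
    simp only [hlog, κ]; field_simp; ring] at hδ
  rw [Real.rpow_def_of_pos hc0, show Real.log c * (1 / (m + n)) = -R by rw [hlog]; field_simp,
    hshift]
  obtain ⟨w, hw, hw0, hwε, j₀, hbj₀⟩ :=
    exists_mem_xYset_norm_diagScale_lt hm (fun i => (ha' i).le) (by linarith) hδ
  obtain ⟨b', hb'sum, hb'lt, hb'le⟩ := exists_forall_lt_neg_sum_eq_sub (fun j => (hb' j).le) hR.le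
    (div_pos hR hm0) (j₀ := j₀) (by rw [Fintype.card_fin]; linarith)
  simp only [Fintype.card_fin] at hb'sum hb'le
  refine ⟨fun i => a i + κ, b', ?_, ?_, fun i => by linarith [ha' i], hb'lt, ?_⟩
  · rw [sum_add_distrib, ha, sum_const, card_univ, Fintype.card_fin, nsmul_eq_mul]
    simp only [κ]; field_simp
  · rw [hb'sum, hb]; ring
  · convert deltaSet_diagAct_lt (κ := κ) hw hw0 hwε (fun i => le_rfl) hb'le using 1
    rw [← Real.exp_add]; ring_nf

/-- Transference Lemma, part (b). -/
theorem transference_b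
    (m n : ℕ) (hm : 1 ≤ m) (hn : 1 ≤ n) (Y : Fin m → Fin n → ℝ)
    (c : ℝ) (hc0 : 0 < c) (hc1 : c < 1) (t : ℝ) (ht : 0 < t)
    (a : Fin m → ℝ) (b : Fin n → ℝ)
    (ha : ∑ i, a i = t) (hb : ∑ j, b j = -t)
    (ha' : ∀ i, 0 < a i) (hb' : ∀ j, b j < 0)
    (hδ : deltaSet (diagAct a b (xYset m n Y)) <
      c ^ (((m : ℝ) + n - 1) / ((m : ℝ) * ((m : ℝ) + n)))) :
    ∃ (a' : Fin m → ℝ) (b' : Fin n → ℝ),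
      (∑ i, a' i = t - (((n : ℝ) - 1) / ((m : ℝ) + n)) * Real.log c) ∧
      (∑ j, b' j = -(t - (((n : ℝ) - 1) / ((m : ℝ) + n)) * Real.log c)) ∧
      (∀ i, -((1 / ((m : ℝ) + n)) * Real.log (1 / c)) < a' i) ∧
      (∀ j, b' j < -((1 / ((m : ℝ) + n)) * Real.log (1 / c))) ∧
      deltaSet (diagAct a' b' (xYset m n Y)) < c ^ ((1 : ℝ) / ((m : ℝ) + n)) :=
  transference_b_general m n hm hn Y c hc0 hc1 t a b ha hb ha' hb' hδ
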